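/- arXiv:1407.3609 — 6 statements merged into one kernel-verified Lean document; each statement's English description precedes it below -/
import Mathlib

section
/- There exist monotone access structures that cannot be realized by any weighted threshold scheme. Concretely, for the access structure on four participants whose minimal authorized sets are {1,2} and {3,4}, there do not exist natural-number weights w₁, w₂, w₃, w₄ and a threshold t such that for every subset X of {1,2,3,4}, the total weight of X is at least t if and only if X contains {1,2} or contains {3,4}. -/
/-! Weighted threshold access structures are trade robust: exchanging members between two
authorized sets preserves their total weight, so at least one of the two resulting sets is
still authorized. Trading `1` for `3` between `{0, 1}` and `{2, 3}` gives `{0, 3}` and `{1, 2}`,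
neither of which contains a minimal authorized set. -/

theorem le_sum_or_le_sum_of_val_add_eq {ι : Type*} (w : ι → ℕ) {t : ℕ}
    {X₁ X₂ Y₁ Y₂ : Finset ι} (htrade : X₁.val + X₂.val = Y₁.val + Y₂.val)
    (hX₁ : t ≤ ∑ i ∈ X₁, w i) (hX₂ : t ≤ ∑ i ∈ X₂, w i) :
    t ≤ ∑ i ∈ Y₁, w i ∨ t ≤ ∑ i ∈ Y₂, w i := by
  have htotal : ∑ i ∈ X₁, w i + ∑ i ∈ X₂, w i = ∑ i ∈ Y₁, w i + ∑ i ∈ Y₂, w i := by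
    simp only [Finset.sum_eq_multiset_sum, ← Multiset.sum_add, ← Multiset.map_add, htrade]
  omega

/-- There exist monotone access structures that cannot be realized by any weighted
threshold scheme: for the access structure on four participants whose minimal
authorized sets are `{0,1}` and `{2,3}`, there are no natural-number weights
`w` and threshold `t` such that a subset `X` has total weight at least `t`
iff `X` contains `{0,1}` or `{2,3}`. -/
theorem no_weighted_threshold_for_AB_CD :
    ¬ ∃ (w : Fin 4 → ℕ) (t : ℕ),
      ∀ X : Finset (Fin 4),
        (t ≤ ∑ i ∈ X, w i) ↔
          (({0, 1} : Finset (Fin 4)) ⊆ X ∨ ({2, 3} : Finset (Fin 4)) ⊆ X) := by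
  rintro ⟨w, t, hw⟩
  have htrade : ({0, 1} : Finset (Fin 4)).val + ({2, 3} : Finset (Fin 4)).val =
      ({0, 3} : Finset (Fin 4)).val + ({1, 2} : Finset (Fin 4)).val := by decide
  rcases le_sum_or_le_sum_of_val_add_eq w htrade ((hw _).2 (by decide)) ((hw _).2 (by decide))
    with h03 | h12
  · exact absurd ((hw _).1 h03) (by decide)
  · exact absurd ((hw _).1 h12) (by decide)
end

section
/- Let n ≥ r ≥ 0 and let B = b_{n-1} b_{n-2} … b₀ be a binary string of length n containing exactly r ones (a POB(n,r) number). Define p_j = Σ_{i=0}^{j} b_i and the POB value V(B) = Σ_{j=0}^{n-1} b_j · C(j, p_j), where C(j, p_j) denotes the binomial coefficient. Then V(B) ≤ C(n, r) − 1, i.e., V(B) < C(n, r). -/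
def pobVal (n : ℕ) (b : Fin n → Bool) : ℕ :=
  ∑ j : Fin n,
    if b j then Nat.choose (j : ℕ) ((Finset.Iic j).filter (fun i => b i = true)).card
    else 0

lemma map_Iic_castSucc (n : ℕ) (j : Fin n) :
    (Finset.Iic j).map Fin.castSuccEmb = Finset.Iic j.castSucc := by
  ext i
  simp only [Finset.mem_map, Finset.mem_Iic]
  constructor
  · rintro ⟨a, ha, rfl⟩
    exact Fin.castSucc_le_castSucc_iff.mpr ha
  · intro hi
    have hlt : i < Fin.last n := lt_of_le_of_lt hi (Fin.castSucc_lt_last j)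
    refine ⟨i.castPred hlt.ne, ?_, Fin.castSucc_castPred _ _⟩
    rwa [← Fin.castSucc_le_castSucc_iff, Fin.castSucc_castPred]

lemma count_castSucc (n : ℕ) (b : Fin (n+1) → Bool) (j : Fin n) :
    ((Finset.Iic j.castSucc).filter (fun i => b i = true)).card
      = ((Finset.Iic j).filter (fun i => b i.castSucc = true)).card := by
  rw [← map_Iic_castSucc, Finset.filter_map, Finset.card_map]
  rfl

lemma pob_aux (n : ℕ) : ∀ (r : ℕ) (b : Fin n → Bool),
    (Finset.univ.filter (fun j : Fin n => b j = true)).card = r → r ≤ n →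
    pobVal n b < Nat.choose n r := by
  induction n with
  | zero =>
    intro r b hb hrn
    interval_cases r
    simp [pobVal]
  | succ n ih =>
    intro r b hb hrn
    set b' : Fin n → Bool := fun i => b i.castSucc with hb'
    -- split the count
    have hcount : r = (Finset.univ.filter (fun j : Fin n => b' j = true)).card
        + (if b (Fin.last n) then 1 else 0) := by
      rw [← hb, Finset.card_filter, Finset.card_filter]
      rw [Fin.sum_univ_castSucc (f := fun j : Fin (n+1) => if b j = true then 1 else 0)]
    have hIiclast : (Finset.Iic (Fin.last n)) = (Finset.univ : Finset (Fin (n+1))) := by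
      ext i; simp [Fin.le_last]
    -- split the value
    have hval : pobVal (n+1) b = pobVal n b'
        + (if b (Fin.last n) then Nat.choose n r else 0) := by
      unfold pobVal
      rw [Fin.sum_univ_castSucc]
      congr 1
      · apply Finset.sum_congr rfl
        intro j _
        rw [count_castSucc]
        simp [hb']
      · rw [hIiclast, hb]
        simp
    cases hlast : b (Fin.last n) with
    | false =>
      rw [hlast] at hcount hval
      simp at hcount hval
      have hrn' : r ≤ n := by
        rw [hcount]
        exact le_trans (Finset.card_filter_le _ _) (by simp)
      calc pobVal (n+1) b = pobVal n b' := hval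
        _ < Nat.choose n r := ih r b' hcount.symm hrn'
        _ ≤ Nat.choose (n+1) r := Nat.choose_le_choose r (Nat.le_succ n)
    | true =>
      rw [hlast] at hcount hval
      simp at hcount hval
      have hr1 : 1 ≤ r := by omega
      have hcard : (Finset.univ.filter (fun j : Fin n => b' j = true)).card = r - 1 := by
        omega
      have hrn' : r - 1 ≤ n := by omega
      have hih := ih (r - 1) b' hcard hrn'
      obtain ⟨s, rfl⟩ : ∃ s, r = s + 1 := ⟨r - 1, by omega⟩
      simp only [Nat.add_sub_cancel] at hih
      have hsum : Nat.choose (n+1) (s+1) = Nat.choose n s + Nat.choose n (s+1) :=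
        Nat.choose_succ_succ n s
      rw [hval, hsum]
      omega

/-- The value of a POB(n,r) number (a binary string of length `n` with exactly
`r` ones) is strictly less than `C(n, r)`, i.e. at most `C(n, r) - 1`. -/
theorem pobVal_lt_choose (n r : ℕ) (hrn : r ≤ n) (b : Fin n → Bool)
    (hb : (Finset.univ.filter (fun j : Fin n => b j = true)).card = r) :
    pobVal n b < Nat.choose n r :=
  pob_aux n r b hb hrn
end

section
/- The POB representation is unique: the value map V is injective on POB(n,r) numbers. That is, if B and B′ are two binary strings of length n, each with exactly r ones, and V(B) = V(B′), then B = B′, where V(B) = Σ_{j=0}^{n-1} b_j · C(j, p_j) with p_j = Σ_{i=0}^{j} b_i. -/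
/-! A string of length `m` with `k` ones has value `< C(m, k)` (the combinatorial number system).
Hence in a string of length `m + 1` with `k` ones the top bit is set exactly when the value is
at least `C(m, k)`: the value and the number of ones determine the top bit, and then the value
and number of ones of the remaining prefix, so induction on the length recovers every bit. -/

open Finset

namespace Pob

variable (c : ℕ → Bool)

/-- Ones among positions `< m`; the paper's `p_j` is `onesBelow c (j + 1)`. -/
def onesBelow (m : ℕ) : ℕ := #{i ∈ range m | c i}

def value (m : ℕ) : ℕ := ∑ j ∈ range m, if c j then j.choose (onesBelow c (j + 1)) else 0

theorem onesBelow_succ (m : ℕ) :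
    onesBelow c (m + 1) = onesBelow c m + if c m then 1 else 0 := by
  simp only [onesBelow, card_filter, sum_range_succ]

theorem value_succ (m : ℕ) :
    value c (m + 1) = value c m + if c m then m.choose (onesBelow c m + 1) else 0 := by
  rw [value, sum_range_succ, ← value, onesBelow_succ]
  split_ifs <;> rfl

theorem value_lt_choose (m : ℕ) : value c m < m.choose (onesBelow c m) := by
  induction m with
  | zero => simp [value, onesBelow]
  | succ m ih =>
    rw [value_succ, onesBelow_succ]
    split_ifs
    · rw [Nat.choose_succ_succ']
      omega
    · exact ih.trans_le (Nat.choose_le_choose _ m.le_succ)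

theorem apply_eq_true_iff_choose_le_value (m : ℕ) :
    c m = true ↔ m.choose (onesBelow c (m + 1)) ≤ value c (m + 1) := by
  rw [value_succ, onesBelow_succ]
  cases c m
  · simpa using value_lt_choose c m
  · simp

theorem eq_of_value_eq {c c' : ℕ → Bool} {m : ℕ} (hones : onesBelow c m = onesBelow c' m)
    (hval : value c m = value c' m) : ∀ j < m, c j = c' j := by
  induction m with
  | zero => intro j hj; omega
  | succ m ih =>
    have htop : c m = c' m := Bool.eq_iff_iff.2 <| by
      rw [apply_eq_true_iff_choose_le_value, apply_eq_true_iff_choose_le_value, hones, hval]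
    rw [onesBelow_succ, onesBelow_succ, htop] at hones
    have hones' : onesBelow c m = onesBelow c' m := by omega
    rw [value_succ, value_succ, htop, hones', add_left_inj] at hval
    intro j hj
    rcases Nat.lt_succ_iff_lt_or_eq.1 hj with hj | rfl
    · exact ih hones' hval j hj
    · exact htop

theorem card_filter_fin_eq_onesBelow (m : ℕ) : #{j : Fin m | c j} = onesBelow c m := by
  rw [onesBelow, card_filter, card_filter, Fin.sum_univ_eq_sum_range (fun i => if c i then 1 else 0)]

theorem card_filter_Iic_fin_eq_onesBelow {m : ℕ} (j : Fin m) :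
    #((Iic j).filter fun i : Fin m => c i) = onesBelow c (j + 1) := by
  rw [onesBelow, Nat.range_succ_eq_Iic, ← Fin.map_valEmbedding_Iic, filter_map, card_map]
  rfl

theorem pobVal_eq_value (m : ℕ) : pobVal m (fun j => c j) = value c m := by
  simp only [pobVal, card_filter_Iic_fin_eq_onesBelow]
  exact Fin.sum_univ_eq_sum_range (fun j => if c j then j.choose (onesBelow c (j + 1)) else 0) m

end Pob

open Pob in
theorem pobVal_injective_general (n r : ℕ) (b b' : Fin n → Bool)
    (hb : (Finset.univ.filter (fun j : Fin n => b j = true)).card = r)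
    (hb' : (Finset.univ.filter (fun j : Fin n => b' j = true)).card = r)
    (hval : pobVal n b = pobVal n b') :
    b = b' := by
  have extend (b : Fin n → Bool) : ∃ c : ℕ → Bool, b = fun j : Fin n => c j :=
    ⟨Function.extend Fin.val b fun _ => false,
      funext fun j => (Fin.val_injective.extend_apply _ _ j).symm⟩
  obtain ⟨c, rfl⟩ := extend b
  obtain ⟨c', rfl⟩ := extend b'
  rw [card_filter_fin_eq_onesBelow] at hb hb'
  rw [pobVal_eq_value, pobVal_eq_value] at hval
  funext j
  exact eq_of_value_eq (hb.trans hb'.symm) hval j j.isLt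

/-- Uniqueness of the POB representation: the POB value map is injective on
binary strings of length `n` with exactly `r` ones. -/
theorem pobVal_injective (n r : ℕ) (hrn : r ≤ n) (b b' : Fin n → Bool)
    (hb : (Finset.univ.filter (fun j : Fin n => b j = true)).card = r)
    (hb' : (Finset.univ.filter (fun j : Fin n => b' j = true)).card = r)
    (hval : pobVal n b = pobVal n b') :
    b = b' :=
  pobVal_injective_general n r b b' hb hb' hval
end

section
/- The value map V of the POB(n,r) system is a bijection from the set of binary strings of length n having exactly r ones onto the set of integers {0, 1, …, C(n,r) − 1}: V is injective, every value V(B) lies in this range, and every integer in this range is attained as V(B) for some such string B. -/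
open Finset

def weight {n : ℕ} (b : Fin n → Bool) : ℕ := #{j | b j = true}

@[simp]
lemma weight_snoc {n : ℕ} (c : Fin n → Bool) (x : Bool) :
    weight (Fin.snoc c x : Fin (n + 1) → Bool) = weight c + x.toNat := by
  simp only [weight, card_filter, Fin.sum_univ_castSucc, Fin.snoc_castSucc, Fin.snoc_last]
  cases x <;> rfl

lemma card_filter_Iic_castSucc_snoc {n : ℕ} (c : Fin n → Bool) (x : Bool) (i : Fin n) :
    #{j ∈ Iic i.castSucc | (Fin.snoc c x : Fin (n + 1) → Bool) j = true} =
      #{j ∈ Iic i | c j = true} := by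
  rw [← Fin.map_castSuccEmb_Iic, filter_map, card_map]
  simp [Function.comp_def]

lemma pobVal_snoc {n : ℕ} (c : Fin n → Bool) (x : Bool) :
    pobVal (n + 1) (Fin.snoc c x) =
      pobVal n c + if x then n.choose (weight (Fin.snoc c x : Fin (n + 1) → Bool)) else 0 := by
  rw [pobVal, Fin.sum_univ_castSucc]
  simp only [card_filter_Iic_castSucc_snoc, Fin.snoc_castSucc, Fin.snoc_last, Fin.val_last,
    Fin.val_castSucc]
  rw [← Fin.top_eq_last, Iic_top]
  rfl

lemma pobVal_lt_choose_weight : ∀ {n : ℕ} (b : Fin n → Bool), pobVal n b < n.choose (weight b)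
  | 0, b => by simp [pobVal, weight]
  | n + 1, b => by
    induction b using Fin.snocCases with
    | snoc c x =>
      have hc := pobVal_lt_choose_weight c
      cases x
      · simpa [pobVal_snoc] using hc.trans_le (Nat.choose_le_choose _ n.le_succ)
      · simp only [pobVal_snoc, weight_snoc, Bool.toNat_true, if_true, Nat.choose_succ_succ']
        omega

lemma pobVal_snoc_lt_choose_weight_iff {n : ℕ} (c : Fin n → Bool) (x : Bool) :
    pobVal (n + 1) (Fin.snoc c x) < n.choose (weight (Fin.snoc c x : Fin (n + 1) → Bool)) ↔
      x = false := by
  cases x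
  · simpa [pobVal_snoc] using pobVal_lt_choose_weight c
  · simp [pobVal_snoc]

lemma pobVal_mapsTo_weight (n r : ℕ) :
    Set.MapsTo (pobVal n) {b | weight b = r} (Set.Iio (n.choose r)) := by
  rintro b rfl
  exact pobVal_lt_choose_weight b

lemma pobVal_injOn_weight (n r : ℕ) : Set.InjOn (pobVal n) {b | weight b = r} := by
  induction n generalizing r with
  | zero => exact fun b _ b' _ _ => Subsingleton.elim b b'
  | succ n ih =>
    intro b (hb : weight b = r) b' (hb' : weight b' = r) h
    induction b using Fin.snocCases with | snoc c x =>
    induction b' using Fin.snocCases with | snoc c' x' =>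
    have hx : x = x' := by
      have key : x = false ↔ x' = false := by
        rw [← pobVal_snoc_lt_choose_weight_iff, ← pobVal_snoc_lt_choose_weight_iff, h, hb, hb']
      revert key
      cases x <;> cases x' <;> simp
    subst hx
    simp only [weight_snoc] at hb hb'
    have hcc' : c = c' := by
      refine ih (weight c) rfl (show weight c' = weight c by omega) ?_
      simpa [pobVal_snoc, hb, hb'] using h
    rw [hcc']

lemma pobVal_surjOn_weight (n r : ℕ) :
    Set.SurjOn (pobVal n) {b | weight b = r} (Set.Iio (n.choose r)) := by
  induction n generalizing r with
  | zero =>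
    rintro v (hv : v < Nat.choose 0 r)
    obtain ⟨rfl, rfl⟩ : r = 0 ∧ v = 0 := by
      rcases r with _ | r <;> simp_all
    exact ⟨Fin.elim0, by simp [weight], by simp [pobVal]⟩
  | succ n ih =>
    rintro v (hv : v < (n + 1).choose r)
    by_cases hvn : v < n.choose r
    · obtain ⟨c, hc, rfl⟩ := ih r hvn
      exact ⟨Fin.snoc c false, by simpa using hc, by simp [pobVal_snoc]⟩
    · cases r with
      | zero => simp_all
      | succ k =>
        rw [Nat.choose_succ_succ'] at hv
        obtain ⟨c, hc : weight c = k, hcv⟩ :=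
          ih k (show v - n.choose (k + 1) < n.choose k by omega)
        refine ⟨Fin.snoc c true, by simpa using hc, ?_⟩
        simp only [pobVal_snoc, weight_snoc, if_true, hc, hcv, Bool.toNat_true]
        omega

theorem pobVal_bijOn_general (n r : ℕ) :
    Set.BijOn (pobVal n)
      {b : Fin n → Bool | (Finset.univ.filter (fun j : Fin n => b j = true)).card = r}
      (Set.Iio (Nat.choose n r)) :=
  ⟨pobVal_mapsTo_weight n r, pobVal_injOn_weight n r, pobVal_surjOn_weight n r⟩

/-- The POB value map is a bijection from the set of binary strings of length
`n` with exactly `r` ones onto `{0, 1, …, C(n,r) − 1}`. -/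
theorem pobVal_bijOn (n r : ℕ) (hrn : r ≤ n) :
    Set.BijOn (pobVal n)
      {b : Fin n → Bool | (Finset.univ.filter (fun j : Fin n => b j = true)).card = r}
      (Set.Iio (Nat.choose n r)) :=
  pobVal_bijOn_general n r
end

section
/- Validity of the shares produced in the (n,n) POB scheme: let W be a bit string of length m with even Hamming weight 2s, and let r be an integer with s ≤ r and r − s ≤ m − 2s. Suppose A₁ is a bit string of length m such that (i) at each position i where W has a 1, A₁ has a 1 exactly when the number of 1s of W at positions ≤ i is odd (i.e., A₁ alternates 1,0,1,0,… along the 1-positions of W), and (ii) A₁ has exactly r − s ones at positions where W has a 0. Then both A₁ and W ⊕ A₁ have Hamming weight exactly r. -/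
/-!
Along the 1-positions of `W`, the number of 1s of `W` up to a position ranks that position, and
this rank is a bijection onto `{1, …, 2s}`. So `A₁` is `1` at exactly the `s` positions of odd rank
and `W ⊕ A₁` at the `s` positions of even rank. Off the support of `W`, `A₁` and `W ⊕ A₁` agree and
have `r - s` further ones.
-/

open Finset

namespace Finset

variable {α : Type*} [LinearOrder α] (T : Finset α)

theorem strictMonoOn_card_filter_le : StrictMonoOn (fun i => #{j ∈ T | j ≤ i}) T := by
  intro i _ k hk hik
  refine card_lt_card ⟨monotone_filter_right T fun _ _ hj => hj.trans hik.le, fun hsub => ?_⟩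
  exact (not_le.2 hik) (mem_filter.1 (hsub (mem_filter.2 ⟨hk, le_rfl⟩))).2

theorem image_card_filter_le : T.image (fun i => #{j ∈ T | j ≤ i}) = Ioc 0 #T := by
  refine eq_of_subset_of_card_le (fun n hn => ?_) ?_
  · obtain ⟨i, hi, rfl⟩ := mem_image.1 hn
    exact mem_Ioc.2 ⟨card_pos.2 ⟨i, mem_filter.2 ⟨hi, le_rfl⟩⟩, card_filter_le _ _⟩
  · rw [card_image_of_injOn (strictMonoOn_card_filter_le T).injOn, Nat.card_Ioc, Nat.sub_zero]

theorem card_filter_comp_card_filter_le (p : ℕ → Prop) [DecidablePred p] :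
    #{i ∈ T | p #{j ∈ T | j ≤ i}} = #{n ∈ Ioc 0 #T | p n} := by
  rw [← image_card_filter_le, filter_image,
    card_image_of_injOn ((strictMonoOn_card_filter_le T).injOn.mono (filter_subset _ _))]

theorem card_filter_even_card_filter_le : #{i ∈ T | Even #{j ∈ T | j ≤ i}} = #T / 2 := by
  simp only [card_filter_comp_card_filter_le, even_iff_two_dvd, Nat.Ioc_filter_dvd_card_eq_div]

theorem card_filter_odd_card_filter_le : #{i ∈ T | Odd #{j ∈ T | j ≤ i}} = #T - #T / 2 := by
  rw [← card_filter_even_card_filter_le, ← card_filter_add_card_filter_not (s := T)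
    (fun i => Even #{j ∈ T | j ≤ i})]
  simp only [Nat.not_even_iff_odd, Nat.add_sub_cancel_left]

theorem card_filter_eq_card_filter_and_add_card_filter_not_and {ι : Type*} [Fintype ι]
    (p q : ι → Prop) [DecidablePred p] [DecidablePred q] :
    #{i | q i} = #{i | p i ∧ q i} + #{i | ¬p i ∧ q i} := by
  rw [← card_filter_add_card_filter_not (s := {i | q i}) p, filter_filter, filter_filter]
  simp only [and_comm]

end Finset

theorem pob_shares_valid_general (m s r : ℕ) (hsr : s ≤ r)
    (W A₁ : Fin m → Bool)
    (hW : (Finset.univ.filter (fun i => W i = true)).card = 2 * s)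
    (hAlt : ∀ i : Fin m, W i = true →
      (A₁ i = true ↔ Odd ((Finset.Iic i).filter (fun j => W j = true)).card))
    (hFill : (Finset.univ.filter (fun i => W i = false ∧ A₁ i = true)).card = r - s) :
    (Finset.univ.filter (fun i => A₁ i = true)).card = r ∧
    (Finset.univ.filter (fun i => xor (W i) (A₁ i) = true)).card = r := by
  set T : Finset (Fin m) := {i | W i = true}
  have hRank : ∀ i, (Iic i).filter (W · = true) = {j ∈ T | j ≤ i} := by
    intro i; ext j; simp [T, and_comm]
  have hAltRank : ∀ i ∈ T, (A₁ i = true ↔ Odd #{j ∈ T | j ≤ i}) := fun i hi =>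
    hRank i ▸ hAlt i (mem_filter.1 hi).2
  have hOn : #{i | W i = true ∧ A₁ i = true} = s := by
    rw [← filter_filter, filter_congr hAltRank, card_filter_odd_card_filter_le, hW]; omega
  have hOff : #{i | W i = true ∧ A₁ i = false} = s := by
    have hEven : ∀ i ∈ T, (A₁ i = false ↔ Even #{j ∈ T | j ≤ i}) := fun i hi => by
      rw [← Nat.not_odd_iff_even, ← hAltRank i hi, Bool.not_eq_true]
    rw [← filter_filter, filter_congr hEven, card_filter_even_card_filter_le, hW]; omega
  have hXor : ∀ i, (W i = true ∧ xor (W i) (A₁ i) = true ↔ W i = true ∧ A₁ i = false) ∧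
      (¬W i = true ∧ xor (W i) (A₁ i) = true ↔ W i = false ∧ A₁ i = true) := by
    intro i; cases W i <;> cases A₁ i <;> decide
  constructor
  · rw [card_filter_eq_card_filter_and_add_card_filter_not_and (W · = true), hOn]
    simp only [Bool.not_eq_true, hFill]; omega
  · rw [card_filter_eq_card_filter_and_add_card_filter_not_and (W · = true),
      filter_congr fun i _ => (hXor i).1, filter_congr fun i _ => (hXor i).2, hOff, hFill]
    omega

/-- Validity of the shares produced in the (n,n) POB scheme: if `W` is a bit
string of length `m` of even Hamming weight `2s`, `s ≤ r`, `r - s ≤ m - 2s`,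
and `A₁` is a bit string which (i) along the 1-positions of `W` is `1` exactly
at those positions where the number of 1s of `W` so far is odd (the alternating
pattern `1,0,1,0,…`), and (ii) has exactly `r - s` ones at the 0-positions of
`W`, then both `A₁` and `W ⊕ A₁` have Hamming weight exactly `r`. -/
theorem pob_shares_valid (m s r : ℕ) (hsr : s ≤ r) (hrs : r - s ≤ m - 2 * s)
    (W A₁ : Fin m → Bool)
    (hW : (Finset.univ.filter (fun i => W i = true)).card = 2 * s)
    (hAlt : ∀ i : Fin m, W i = true →
      (A₁ i = true ↔ Odd ((Finset.Iic i).filter (fun j => W j = true)).card))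
    (hFill : (Finset.univ.filter (fun i => W i = false ∧ A₁ i = true)).card = r - s) :
    (Finset.univ.filter (fun i => A₁ i = true)).card = r ∧
    (Finset.univ.filter (fun i => xor (W i) (A₁ i) = true)).card = r :=
  pob_shares_valid_general m s r hsr W A₁ hW hAlt hFill
end

section
/- Correctness of the proposed generalized secret sharing scheme: let 𝒜 be a monotone (upward-closed) family of subsets of a finite participant set 𝒫, let B₁, …, B_m be the maximal elements of 𝒜ᶜ = 2^𝒫 \ 𝒜, and let s₁, …, s_m be bit strings of a fixed length b whose bitwise XOR equals the secret K (an (m,m) XOR scheme). Participant P receives share s_j exactly when P ∉ B_j. Then for every authorized set X ∈ 𝒜, the set of indices J(X) = { j : ∃ P ∈ X, P ∉ B_j } of shares jointly held by X equals {1, …, m}, and therefore the bitwise XOR of the shares { s_j : j ∈ J(X) } equals K; and for every unauthorized set X ∉ 𝒜 there exists an index j with X ⊆ B_j, so no participant of X holds s_j. -/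
/-!
An authorized set cannot be contained in any `B j`, since `B j` is unauthorized and `𝒜` is
upward closed; hence it meets the complement of every `B j` and collects all `m` shares, whose
XOR is `K`. Conversely, in the finite poset `Finset P` every unauthorized set lies below a
maximal unauthorized one, and each of those occurs among the `B j`.
-/

theorem filter_exists_notMem_eq_univ {P ι : Type*} [DecidableEq P] [Fintype ι]
    {𝒜 : Set (Finset P)} (h𝒜 : IsUpperSet 𝒜) {B : ι → Finset P} (hB : ∀ j, B j ∉ 𝒜)
    {X : Finset P} (hX : X ∈ 𝒜) :
    Finset.univ.filter (fun j => ∃ p ∈ X, p ∉ B j) = Finset.univ := by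
  refine Finset.filter_true_of_mem fun j _ => ?_
  by_contra! hXB
  exact hB j (h𝒜 hXB hX)

theorem exists_subset_of_notMem {P ι : Type*} [Finite P] {𝒜 : Set (Finset P)}
    {B : ι → Finset P}
    (hB : ∀ C : Finset P, C ∉ 𝒜 → (∀ C' : Finset P, C' ∉ 𝒜 → C ⊆ C' → C' = C) →
      ∃ j, B j = C)
    {X : Finset P} (hX : X ∉ 𝒜) : ∃ j, X ⊆ B j := by
  obtain ⟨D, hXD, hD⟩ := Finite.exists_le_maximal (p := (· ∉ 𝒜)) hX
  obtain ⟨j, rfl⟩ := hB D hD.prop fun C hC hDC => (hD.eq_of_le hC hDC).symm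
  exact ⟨j, hXD⟩

/-- Correctness of the proposed generalized secret sharing scheme: let `𝒜` be a
monotone access structure over a finite participant set, let `B 1, …, B m` be
the maximal unauthorized sets (maximal elements of the complement of `𝒜`), and
let `s 1, …, s m` be bit strings of length `b` (bits in `ZMod 2`, XOR being
addition) whose XOR is the secret `K`.  Participant `p` holds share `s j` iff
`p ∉ B j`.  Then every authorized set `X ∈ 𝒜` jointly holds all `m` shares
(its index set `J(X) = {j | ∃ p ∈ X, p ∉ B j}` is everything) and the XOR of
the shares it holds is `K`, while every unauthorized set `X ∉ 𝒜` is contained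
in some `B j`, so none of its members holds `s j`. -/
theorem generalized_pob_scheme_correctness
    {P : Type*} [Fintype P] [DecidableEq P] (𝒜 : Set (Finset P))
    (hmono : ∀ A₁ A₂ : Finset P, A₁ ∈ 𝒜 → A₁ ⊆ A₂ → A₂ ∈ 𝒜)
    (m : ℕ) (B : Fin m → Finset P)
    (hBmax : ∀ j : Fin m, B j ∉ 𝒜 ∧ ∀ C : Finset P, C ∉ 𝒜 → B j ⊆ C → C = B j)
    (hBall : ∀ C : Finset P, C ∉ 𝒜 → (∀ C' : Finset P, C' ∉ 𝒜 → C ⊆ C' → C' = C) →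
      ∃ j : Fin m, B j = C)
    (b : ℕ) (s : Fin m → Fin b → ZMod 2) (K : Fin b → ZMod 2)
    (hK : ∀ i : Fin b, ∑ j : Fin m, s j i = K i) :
    (∀ X : Finset P, X ∈ 𝒜 →
      (Finset.univ.filter (fun j : Fin m => ∃ p ∈ X, p ∉ B j)) = Finset.univ ∧
      ∀ i : Fin b,
        ∑ j ∈ Finset.univ.filter (fun j : Fin m => ∃ p ∈ X, p ∉ B j), s j i = K i) ∧
    (∀ X : Finset P, X ∉ 𝒜 → ∃ j : Fin m, X ⊆ B j) := by
  have h𝒜 : IsUpperSet 𝒜 := fun _ _ hle hA => hmono _ _ hA hle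
  refine ⟨fun X hX => ?_, fun X hX => exists_subset_of_notMem hBall hX⟩
  have hJ := filter_exists_notMem_eq_univ h𝒜 (fun j => (hBmax j).1) hX
  exact ⟨hJ, fun i => by rw [hJ]; exact hK i⟩
end
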